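/- arXiv:2305.13531 — 3 statements merged into one kernel-verified Lean document; each statement's English description precedes it below -/
import Mathlib

section
/- The function W(x) = (1 + |x|²/3)^(-1/2) on ℝ³ is smooth and satisfies the elliptic equation -ΔW(x) = W(x)⁵ for every x ∈ ℝ³. -/
open MeasureTheory Complex
open scoped BigOperators ENNReal

noncomputable section

abbrev E3 := EuclideanSpace ℝ (Fin 3)

/-- The Aubin–Talenti ground state `W(x) = (1 + |x|²/3)^(-1/2)`. -/
def W (x : E3) : ℝ := (1 + ‖x‖ ^ 2 / 3) ^ (-(1 : ℝ) / 2)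

/-- `W` viewed as a complex-valued function. -/
def Wc (x : E3) : ℂ := (W x : ℂ)

/-- Standard basis vectors of ℝ³. -/
def e3 (i : Fin 3) : E3 := EuclideanSpace.single i 1

/-- Partial derivative of a real-valued function. -/
def pdR (i : Fin 3) (f : E3 → ℝ) (x : E3) : ℝ := fderiv ℝ f x (e3 i)

/-- Partial derivative of a complex-valued function. -/
def pdC (i : Fin 3) (f : E3 → ℂ) (x : E3) : ℂ := fderiv ℝ f x (e3 i)

/-- Squared gradient `|∇f|²` of a real-valued function. -/
def gradSqR (f : E3 → ℝ) (x : E3) : ℝ := ∑ i, (pdR i f x) ^ 2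

/-- Squared gradient `|∇f|²` of a complex-valued function. -/
def gradSqC (f : E3 → ℂ) (x : E3) : ℝ := ∑ i, ‖pdC i f x‖ ^ 2

/-- Laplacian of a real-valued function. -/
def lapR (f : E3 → ℝ) (x : E3) : ℝ := ∑ i, pdR i (pdR i f) x

/-- Laplacian of a complex-valued function. -/
def lapC (f : E3 → ℂ) (x : E3) : ℂ := ∑ i, pdC i (pdC i f) x

/-- Quintic (energy-critical) energy `E^c`. -/
def Ecrit (f : E3 → ℂ) : ℝ := ∫ x : E3, ((1:ℝ)/2 * gradSqC f x - 1/6 * ‖f x‖ ^ 6)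

/-- Cubic–quintic energy `E`. -/
def Ecq (f : E3 → ℂ) : ℝ :=
  ∫ x : E3, ((1:ℝ)/2 * gradSqC f x - 1/6 * ‖f x‖ ^ 6 + 1/4 * ‖f x‖ ^ 4)

/-- Regular solutions of the cubic–quintic NLS on an interval `I ⊆ ℝ`. -/
def IsRegularSolution (I : Set ℝ) (u : ℝ → E3 → ℂ) : Prop :=
  ContDiffOn ℝ (⊤ : ℕ∞) (fun p : ℝ × E3 => u p.1 p.2) (I ×ˢ Set.univ) ∧
  (∀ t ∈ I, ∀ x : E3, Complex.I * deriv (fun s => u s x) t + lapC (u t) x =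
      (‖u t x‖ : ℂ) ^ 2 * u t x - (‖u t x‖ : ℂ) ^ 4 * u t x) ∧
  (∀ J : Set ℝ, IsCompact J → J ⊆ I → ∀ n k : ℕ, ∃ C : ℝ, ∀ t ∈ J, ∀ x : E3,
      (1 + ‖x‖) ^ n * ‖iteratedFDeriv ℝ k (u t) x‖ ≤ C)


/-! ### Auxiliary lemmas for `ground_state_equation` -/

namespace GroundStateAux

def q (x : E3) : ℝ := 1 + ‖x‖ ^ 2 / 3

lemma q_pos (x : E3) : 0 < q x := by unfold q; positivity

lemma W_eq (x : E3) : W x = q x ^ (-(1:ℝ)/2) := rfl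

lemma hasFDerivAt_q (x : E3) :
    HasFDerivAt q (((2:ℝ)/3) • innerSL ℝ x) x := by
  have h := (((hasStrictFDerivAt_norm_sq x).hasFDerivAt.mul_const
    ((3:ℝ)⁻¹)).const_add 1 : HasFDerivAt (fun y : E3 => 1 + ‖y‖^2 * 3⁻¹) _ x)
  have hq : q = fun y : E3 => 1 + ‖y‖^2 * 3⁻¹ := by
    funext y; simp [q, div_eq_mul_inv]
  rw [hq]
  refine h.congr_fderiv ?_
  ext y
  simp [smul_smul]
  ring

lemma contDiff_q : ContDiff ℝ (⊤ : ℕ∞) q :=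
  contDiff_const.add ((contDiff_norm_sq ℝ).div_const 3)

lemma innerSL_e3 (x : E3) (i : Fin 3) : innerSL ℝ x (e3 i) = x i := by
  simp [e3, innerSL_apply_apply, EuclideanSpace.inner_single_right]

lemma e3_self (i : Fin 3) : e3 i i = 1 := by simp [e3]

lemma hasFDerivAt_W (x : E3) :
    HasFDerivAt W ((((-1:ℝ)/3) * q x ^ ((-3:ℝ)/2)) • innerSL ℝ x) x := by
  have h := (hasFDerivAt_q x).rpow_const (p := -(1:ℝ)/2) (Or.inl (q_pos x).ne')
  have hW : W = fun y => q y ^ (-(1:ℝ)/2) := rfl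
  rw [hW]
  refine h.congr_fderiv ?_
  rw [smul_smul]
  congr 1
  rw [show (-(1:ℝ)/2 - 1) = (-3:ℝ)/2 by norm_num]
  ring

lemma pdR_W (i : Fin 3) (x : E3) :
    pdR i W x = ((-1:ℝ)/3) * q x ^ ((-3:ℝ)/2) * x i := by
  unfold pdR
  rw [(hasFDerivAt_W x).fderiv, ContinuousLinearMap.smul_apply, innerSL_e3, smul_eq_mul]

lemma pdR_W_fun (i : Fin 3) :
    pdR i W = fun y => ((-1:ℝ)/3) * q y ^ ((-3:ℝ)/2) * y i := by
  funext y; exact pdR_W i y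

lemma pdR_pdR_W (i : Fin 3) (x : E3) :
    pdR i (pdR i W) x =
      ((-1:ℝ)/3) * q x ^ ((-3:ℝ)/2) + (1/3) * (x i)^2 * q x ^ ((-5:ℝ)/2) := by
  have hc : HasFDerivAt (fun y => ((-1:ℝ)/3) * q y ^ ((-3:ℝ)/2))
      ((((-1:ℝ)/3)) • (((-3:ℝ)/2 * q x ^ ((-3:ℝ)/2 - 1)) • (((2:ℝ)/3) • innerSL ℝ x))) x := by
    exact ((hasFDerivAt_q x).rpow_const (Or.inl (q_pos x).ne')).const_mul _
  have hp : HasFDerivAt (fun y : E3 => y i) (EuclideanSpace.proj i : E3 →L[ℝ] ℝ) x :=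
    (EuclideanSpace.proj i : E3 →L[ℝ] ℝ).hasFDerivAt
  have hmul : HasFDerivAt (fun y : E3 => ((-1:ℝ)/3) * q y ^ ((-3:ℝ)/2) * y i) _ x := hc.mul hp
  rw [pdR_W_fun]
  unfold pdR
  rw [hmul.fderiv]
  have hproj : (EuclideanSpace.proj (𝕜 := ℝ) i) (e3 i) = 1 := by
    simp [e3]
  simp only [ContinuousLinearMap.add_apply, ContinuousLinearMap.smul_apply, hproj,
    innerSL_e3, smul_eq_mul]
  rw [show ((-3:ℝ)/2 - 1) = (-5:ℝ)/2 by norm_num]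
  ring

lemma norm_sq_eq_sum (x : E3) : ‖x‖ ^ 2 = ∑ i, (x i) ^ 2 := by
  rw [PiLp.norm_sq_eq_of_L2]
  simp [Real.norm_eq_abs, sq_abs]

lemma lapR_W (x : E3) :
    lapR W x = -(q x ^ ((-3:ℝ)/2)) + (1/3) * ‖x‖^2 * q x ^ ((-5:ℝ)/2) := by
  unfold lapR
  simp only [pdR_pdR_W]
  rw [Finset.sum_add_distrib, Finset.sum_const, Finset.card_univ, norm_sq_eq_sum x]
  simp only [Fintype.card_fin, nsmul_eq_mul, Nat.cast_ofNat]
  rw [Finset.mul_sum, Finset.sum_mul]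
  congr 1
  · ring


lemma W_pow_five (x : E3) : (W x) ^ 5 = q x ^ ((-5:ℝ)/2) := by
  rw [W_eq, ← Real.rpow_natCast (q x ^ (-(1:ℝ)/2)) 5, ← Real.rpow_mul (q_pos x).le]
  norm_num

end GroundStateAux

/-- `W` is smooth and satisfies `-ΔW = W⁵`. -/
theorem ground_state_equation :
    ContDiff ℝ (⊤ : ℕ∞) W ∧ ∀ x : E3, -lapR W x = (W x) ^ 5 := by
  open GroundStateAux in
  constructor
  · rw [contDiff_iff_contDiffAt]
    intro x
    exact (contDiff_q.contDiffAt).rpow_const_of_ne (q_pos x).ne'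
  · intro x
    rw [GroundStateAux.lapR_W, GroundStateAux.W_pow_five]
    have h1 : GroundStateAux.q x ^ ((-3:ℝ)/2)
        = GroundStateAux.q x ^ ((-5:ℝ)/2) * GroundStateAux.q x := by
      rw [show ((-3:ℝ)/2) = (-5:ℝ)/2 + 1 by norm_num,
        Real.rpow_add (GroundStateAux.q_pos x), Real.rpow_one]
    rw [h1]
    have hq : GroundStateAux.q x = 1 + ‖x‖^2/3 := rfl
    rw [hq]
    ring
end
end

section
/- Vanishing of the critical virial functional at rescaled ground states: for every real-valued smooth compactly supported w : ℝ³ → ℝ and every λ > 0, setting W_λ(x) = λ^{1/2} W(λx), one has ∫_{ℝ³} [ −(ΔΔw)(x) W_λ(x)² + 4 Σ_{j,k=1}^{3} ∂_j W_λ(x) ∂_k W_λ(x) ∂_j∂_k w(x) − (4/3) (Δw)(x) W_λ(x)⁶ ] dx = 0. -/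
open MeasureTheory Complex
open scoped BigOperators ENNReal

noncomputable section

namespace VirialAux

def sl (lam : ℝ) : ℝ := Real.sqrt lam
def aa (lam : ℝ) : ℝ := lam ^ 2 / 3
def p0 (lam : ℝ) (x : E3) : ℝ := 1 + aa lam * ‖x‖ ^ 2
def rr (lam q : ℝ) (x : E3) : ℝ := p0 lam x ^ q
def Vv (lam : ℝ) (x : E3) : ℝ := sl lam * rr lam (-(1:ℝ)/2) x
def Gg (lam : ℝ) (i : Fin 3) (x : E3) : ℝ :=
  -(sl lam * aa lam) * rr lam (-(3:ℝ)/2) x * x i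
def Mm (lam : ℝ) (j k : Fin 3) (x : E3) : ℝ :=
  3 * sl lam * aa lam ^ 2 * rr lam (-(5:ℝ)/2) x * x j * x k
    - sl lam * aa lam * rr lam (-(3:ℝ)/2) x * (if j = k then 1 else 0)

lemma p0_pos (lam : ℝ) (x : E3) : 0 < p0 lam x := by
  have h1 : 0 ≤ aa lam * ‖x‖ ^ 2 := by
    apply mul_nonneg
    · unfold aa; positivity
    · positivity
  unfold p0; linarith

lemma hasFDerivAt_normsq (x : E3) :
    HasFDerivAt (fun y : E3 => ‖y‖ ^ 2) ((2:ℝ) • (innerSL ℝ x : E3 →L[ℝ] ℝ)) x := by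
  have h := (hasFDerivAt_id x).inner ℝ (hasFDerivAt_id x)
  simp only [id_eq] at h
  have heq : (fun y : E3 => (inner ℝ y y : ℝ)) = fun y : E3 => ‖y‖ ^ 2 := by
    funext y; exact real_inner_self_eq_norm_sq y
  rw [heq] at h
  refine h.congr_fderiv ?_
  ext v
  simp [fderivInnerCLM_apply, real_inner_comm, two_smul, two_mul, mul_comm]

lemma hasFDerivAt_rr (lam q : ℝ) (x : E3) :
    HasFDerivAt (rr lam q)
      ((q * rr lam (q-1) x * (2 * aa lam)) • (innerSL ℝ x : E3 →L[ℝ] ℝ)) x := by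
  have hp0 : HasFDerivAt (p0 lam) ((aa lam) • ((2:ℝ) • (innerSL ℝ x : E3 →L[ℝ] ℝ))) x :=
    ((hasFDerivAt_normsq x).const_mul (aa lam)).const_add 1
  have h := hp0.rpow_const (p := q) (Or.inl (p0_pos lam x).ne')
  refine h.congr_fderiv ?_
  rw [smul_smul, smul_smul]
  unfold rr
  ring_nf

lemma innerSL_e3 (x : E3) (i : Fin 3) : (innerSL ℝ x) (e3 i) = x i := by
  simp [e3, EuclideanSpace.inner_single_right]

lemma pdR_rr (lam q : ℝ) (i : Fin 3) (x : E3) :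
    pdR i (rr lam q) x = q * rr lam (q-1) x * (2 * aa lam) * x i := by
  unfold pdR
  rw [(hasFDerivAt_rr lam q x).fderiv]
  rw [ContinuousLinearMap.smul_apply, innerSL_e3, smul_eq_mul]

lemma diff_rr (lam q : ℝ) : Differentiable ℝ (rr lam q) :=
  fun x => (hasFDerivAt_rr lam q x).differentiableAt

lemma diff_proj (i : Fin 3) : Differentiable ℝ (fun x : E3 => x i) :=
  (EuclideanSpace.proj (𝕜 := ℝ) i).differentiable

lemma fderiv_proj (i : Fin 3) (x : E3) (j : Fin 3) :
    fderiv ℝ (fun y : E3 => y i) x (e3 j) = if i = j then 1 else 0 := by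
  have : fderiv ℝ (fun y : E3 => y i) x = EuclideanSpace.proj (𝕜 := ℝ) i :=
    (EuclideanSpace.proj (𝕜 := ℝ) i).fderiv
  rw [this]
  simp [e3, EuclideanSpace.single_apply]

lemma diff_Vv (lam : ℝ) : Differentiable ℝ (Vv lam) :=
  (diff_rr lam _).const_mul _

lemma diff_Gg (lam : ℝ) (i : Fin 3) : Differentiable ℝ (Gg lam i) :=
  (((diff_rr lam _).const_mul _).mul (diff_proj i))

lemma pd_Vv (lam : ℝ) (i : Fin 3) (x : E3) : pdR i (Vv lam) x = Gg lam i x := by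
  unfold pdR Vv
  rw [fderiv_const_mul (diff_rr lam _ x)]
  rw [ContinuousLinearMap.smul_apply, smul_eq_mul]
  have : fderiv ℝ (rr lam (-(1:ℝ)/2)) x (e3 i) = pdR i (rr lam (-(1:ℝ)/2)) x := rfl
  rw [this, pdR_rr]
  rw [show (-(1:ℝ)/2 - 1) = -(3:ℝ)/2 by norm_num]
  unfold Gg
  ring

lemma pd_Gg (lam : ℝ) (j k : Fin 3) (x : E3) : pdR j (Gg lam k) x = Mm lam j k x := by
  unfold pdR Gg
  have h1 : DifferentiableAt ℝ (fun y : E3 => -(sl lam * aa lam) * rr lam (-(3:ℝ)/2) y) x :=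
    ((diff_rr lam _).const_mul _) x
  rw [fderiv_fun_mul h1 (diff_proj k x)]
  rw [ContinuousLinearMap.add_apply, ContinuousLinearMap.smul_apply,
    ContinuousLinearMap.smul_apply, smul_eq_mul, smul_eq_mul, fderiv_proj,
    fderiv_const_mul (diff_rr lam _ x), ContinuousLinearMap.smul_apply, smul_eq_mul]
  have : fderiv ℝ (rr lam (-(3:ℝ)/2)) x (e3 j) = pdR j (rr lam (-(3:ℝ)/2)) x := rfl
  rw [this, pdR_rr, show (-(3:ℝ)/2 - 1) = -(5:ℝ)/2 by norm_num]
  unfold Mm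
  rw [show (if k = j then (1:ℝ) else 0) = (if j = k then (1:ℝ) else 0) by simp [eq_comm]]
  ring

lemma pd_Vpow (lam : ℝ) (n : ℕ) (i : Fin 3) (x : E3) :
    pdR i (fun y => Vv lam y ^ n) x = n * Vv lam x ^ (n-1) * Gg lam i x := by
  unfold pdR
  show (fderiv ℝ ((fun s : ℝ => s ^ n) ∘ Vv lam) x) (e3 i) = _
  rw [((hasDerivAt_pow n (Vv lam x)).comp_hasFDerivAt x (diff_Vv lam x).hasFDerivAt).fderiv]
  rw [ContinuousLinearMap.smul_apply, smul_eq_mul]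
  have : fderiv ℝ (Vv lam) x (e3 i) = pdR i (Vv lam) x := rfl
  rw [this, pd_Vv]

lemma pd_Q (lam : ℝ) (i : Fin 3) (x : E3) :
    pdR i (fun y => 2 * Vv lam y * Gg lam i y) x
      = 2 * Gg lam i x ^ 2 + 2 * Vv lam x * Mm lam i i x := by
  have h : (fun y => 2 * Vv lam y * Gg lam i y)
      = fun y => (2 * Vv lam y) * Gg lam i y := rfl
  unfold pdR
  rw [h, fderiv_fun_mul (((diff_Vv lam).const_mul 2) x) (diff_Gg lam i x)]
  rw [ContinuousLinearMap.add_apply, ContinuousLinearMap.smul_apply,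
    ContinuousLinearMap.smul_apply, smul_eq_mul, smul_eq_mul,
    fderiv_const_mul (diff_Vv lam x), ContinuousLinearMap.smul_apply, smul_eq_mul]
  have h1 : fderiv ℝ (Gg lam i) x (e3 i) = pdR i (Gg lam i) x := rfl
  have h2 : fderiv ℝ (Vv lam) x (e3 i) = pdR i (Vv lam) x := rfl
  rw [h1, h2, pd_Gg, pd_Vv]
  ring

lemma pd_GG (lam : ℝ) (j k : Fin 3) (x : E3) :
    pdR j (fun y => Gg lam j y * Gg lam k y) x
      = Mm lam j j x * Gg lam k x + Gg lam j x * Mm lam j k x := by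
  unfold pdR
  rw [fderiv_fun_mul (diff_Gg lam j x) (diff_Gg lam k x)]
  rw [ContinuousLinearMap.add_apply, ContinuousLinearMap.smul_apply,
    ContinuousLinearMap.smul_apply, smul_eq_mul, smul_eq_mul]
  have h1 : fderiv ℝ (Gg lam j) x (e3 j) = pdR j (Gg lam j) x := rfl
  have h2 : fderiv ℝ (Gg lam k) x (e3 j) = pdR j (Gg lam k) x := rfl
  rw [h1, h2, pd_Gg, pd_Gg]
  ring

lemma pd_gradSq (lam : ℝ) (k : Fin 3) (x : E3) :
    pdR k (fun y => ∑ j, Gg lam j y ^ 2) x = ∑ j, 2 * Gg lam j x * Mm lam k j x := by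
  unfold pdR
  rw [fderiv_fun_sum (A := fun j y => Gg lam j y ^ 2) (fun j _ => ((diff_Gg lam j x).pow 2))]
  rw [ContinuousLinearMap.sum_apply]
  refine Finset.sum_congr rfl (fun j _ => ?_)
  show (fderiv ℝ ((fun s : ℝ => s ^ 2) ∘ Gg lam j) x) (e3 k) = _
  rw [((hasDerivAt_pow 2 (Gg lam j x)).comp_hasFDerivAt x (diff_Gg lam j x).hasFDerivAt).fderiv]
  rw [ContinuousLinearMap.smul_apply, smul_eq_mul]
  have h1 : fderiv ℝ (Gg lam j) x (e3 k) = pdR k (Gg lam j) x := rfl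
  rw [h1, pd_Gg]
  ring

lemma normsq_coord (x : E3) : ‖x‖ ^ 2 = x 0 ^ 2 + x 1 ^ 2 + x 2 ^ 2 := by
  rw [EuclideanSpace.norm_eq, Real.sq_sqrt (by positivity)]
  simp [Fin.sum_univ_three, Real.norm_eq_abs, sq_abs]

lemma rr_step (lam : ℝ) (x : E3) :
    rr lam (-(3:ℝ)/2) x = rr lam (-(5:ℝ)/2) x * p0 lam x := by
  unfold rr
  rw [show (-(3:ℝ)/2) = -(5:ℝ)/2 + 1 by norm_num, Real.rpow_add_one (p0_pos lam x).ne']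

lemma rr_pow5 (lam : ℝ) (x : E3) :
    rr lam (-(1:ℝ)/2) x ^ (5:ℕ) = rr lam (-(5:ℝ)/2) x := by
  unfold rr
  rw [← Real.rpow_natCast (p0 lam x ^ (-(1:ℝ)/2)) 5, ← Real.rpow_mul (p0_pos lam x).le]
  norm_num

lemma sl_pow5 (lam : ℝ) (hlam : 0 < lam) : sl lam ^ (5:ℕ) = lam ^ 2 * sl lam := by
  have h2 : sl lam ^ 2 = lam := Real.sq_sqrt hlam.le
  calc sl lam ^ (5:ℕ) = (sl lam ^ 2) ^ 2 * sl lam := by ring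
  _ = lam ^ 2 * sl lam := by rw [h2]

lemma sum_Mm (lam : ℝ) (hlam : 0 < lam) (x : E3) :
    ∑ j, Mm lam j j x = -(Vv lam x ^ 5) := by
  have hV5 : Vv lam x ^ 5 = lam ^ 2 * sl lam * rr lam (-(5:ℝ)/2) x := by
    unfold Vv
    rw [mul_pow, rr_pow5, sl_pow5 lam hlam]
  rw [hV5]
  simp only [Mm, if_pos rfl, eq_self_iff_true, if_true, Fin.sum_univ_three]
  rw [rr_step lam x]
  unfold p0 aa
  rw [normsq_coord]
  ring

lemma cont_rr (lam q : ℝ) : Continuous (rr lam q) := (diff_rr lam q).continuous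
lemma cont_Vv (lam : ℝ) : Continuous (Vv lam) := (diff_Vv lam).continuous
lemma cont_Gg (lam : ℝ) (i : Fin 3) : Continuous (Gg lam i) := (diff_Gg lam i).continuous
lemma cont_Mm (lam : ℝ) (j k : Fin 3) : Continuous (Mm lam j k) := by
  unfold Mm
  exact ((((continuous_const.mul (cont_rr lam _)).mul
    ((EuclideanSpace.proj (𝕜 := ℝ) j).continuous)).mul
    ((EuclideanSpace.proj (𝕜 := ℝ) k).continuous)).sub
    ((continuous_const.mul (cont_rr lam _)).mul continuous_const))

lemma contDiff_pdR {f : E3 → ℝ} (hf : ContDiff ℝ (⊤ : ℕ∞) f) (i : Fin 3) :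
    ContDiff ℝ (⊤ : ℕ∞) (pdR i f) :=
  (hf.fderiv_right (by simp)).clm_apply contDiff_const

lemma hcs_pdR {f : E3 → ℝ} (hf : HasCompactSupport f) (i : Fin 3) :
    HasCompactSupport (pdR i f) :=
  hf.fderiv_apply ℝ (e3 i)

lemma contDiff_lapR {f : E3 → ℝ} (hf : ContDiff ℝ (⊤ : ℕ∞) f) : ContDiff ℝ (⊤ : ℕ∞) (lapR f) :=
  ContDiff.sum (fun i _ => contDiff_pdR (contDiff_pdR hf i) i)

lemma hcs_lapR {f : E3 → ℝ} (hf : HasCompactSupport f) : HasCompactSupport (lapR f) := by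
  have h : lapR f = fun x => pdR 0 (pdR 0 f) x + pdR 1 (pdR 1 f) x + pdR 2 (pdR 2 f) x := by
    funext x; exact Fin.sum_univ_three _
  rw [h]
  exact ((hcs_pdR (hcs_pdR hf 0) 0).add (hcs_pdR (hcs_pdR hf 1) 1)).add
    (hcs_pdR (hcs_pdR hf 2) 2)

lemma integrable_mul_cs {f g : E3 → ℝ} (hf : Continuous f) (hg : Continuous g)
    (hgs : HasCompactSupport g) : Integrable (fun x => f x * g x) :=
  (hf.mul hg).integrable_of_hasCompactSupport hgs.mul_left

lemma ibp (i : Fin 3) {f f' g : E3 → ℝ}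
    (hfd : Differentiable ℝ f) (hf' : ∀ x, pdR i f x = f' x) (hf'c : Continuous f')
    (hg : ContDiff ℝ (⊤ : ℕ∞) g) (hgs : HasCompactSupport g) :
    ∫ x : E3, f x * pdR i g x = - ∫ x : E3, f' x * g x := by
  have hgd : Differentiable ℝ g := hg.differentiable (by simp)
  have hfc : Continuous f := hfd.continuous
  have hkey : (fun x : E3 => fderiv ℝ f x (e3 i) * g x) = fun x => f' x * g x := by
    funext x
    rw [show fderiv ℝ f x (e3 i) = pdR i f x from rfl, hf']
  have h1 : Integrable (fun x : E3 => fderiv ℝ f x (e3 i) * g x) := by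
    rw [hkey]; exact integrable_mul_cs hf'c hg.continuous hgs
  have h2 : Integrable (fun x : E3 => f x * fderiv ℝ g x (e3 i)) :=
    integrable_mul_cs hfc (contDiff_pdR hg i).continuous (hcs_pdR hgs i)
  have h3 : Integrable (fun x : E3 => f x * g x) :=
    integrable_mul_cs hfc hg.continuous hgs
  have h := integral_mul_fderiv_eq_neg_fderiv_mul_of_integrable h1 h2 h3 (fun x _ => hfd x) (fun x _ => hgd x)
  calc ∫ x : E3, f x * pdR i g x = ∫ x : E3, f x * fderiv ℝ g x (e3 i) := rfl
  _ = - ∫ x : E3, fderiv ℝ f x (e3 i) * g x := h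
  _ = - ∫ x : E3, f' x * g x := by rw [hkey]

lemma integrable_cs_mul {f g : E3 → ℝ} (hf : Continuous f) (hfs : HasCompactSupport f)
    (hg : Continuous g) : Integrable (fun x => f x * g x) :=
  (integrable_mul_cs hg hf hfs).congr (Filter.Eventually.of_forall fun x => mul_comm _ _)

lemma Mm_symm (lam : ℝ) (j k : Fin 3) (x : E3) : Mm lam j k x = Mm lam k j x := by
  unfold Mm
  rw [show (if j = k then (1:ℝ) else 0) = if k = j then 1 else 0 by simp [eq_comm]]
  ring

lemma Vv_eq (lam : ℝ) (y : E3) : Real.sqrt lam * W (lam • y) = Vv lam y := by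
  unfold Vv sl rr p0 aa W
  rw [show (1 + ‖lam • y‖ ^ 2 / 3) = 1 + lam ^ 2 / 3 * ‖y‖ ^ 2 by
    rw [norm_smul, mul_pow, Real.norm_eq_abs, _root_.sq_abs]; ring]

section Chains

variable {w : E3 → ℝ} (hw : ContDiff ℝ (⊤ : ℕ∞) w) (hsupp : HasCompactSupport w) (lam : ℝ)

include hw hsupp

lemma chainA (i : Fin 3) :
    (∫ x : E3, Vv lam x ^ 2 * pdR i (pdR i (lapR w)) x)
      = ∫ x : E3, (2 * Gg lam i x ^ 2 + 2 * Vv lam x * Mm lam i i x) * lapR w x := by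
  have s1 := ibp i (f := fun x => Vv lam x ^ 2)
    (f' := fun x => 2 * Vv lam x * Gg lam i x)
    ((diff_Vv lam).pow 2)
    (fun x => by rw [pd_Vpow]; norm_num)
    ((continuous_const.mul (cont_Vv lam)).mul (cont_Gg lam i))
    (contDiff_pdR (contDiff_lapR hw) i) (hcs_pdR (hcs_lapR hsupp) i)
  have s2 := ibp i (f := fun x => 2 * Vv lam x * Gg lam i x)
    (f' := fun x => 2 * Gg lam i x ^ 2 + 2 * Vv lam x * Mm lam i i x)
    (((diff_Vv lam).const_mul 2).mul (diff_Gg lam i))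
    (pd_Q lam i)
    ((continuous_const.mul ((cont_Gg lam i).pow 2)).add
      ((continuous_const.mul (cont_Vv lam)).mul (cont_Mm lam i i)))
    (contDiff_lapR hw) (hcs_lapR hsupp)
  rw [s1, s2, neg_neg]

lemma chainB (j k : Fin 3) :
    (∫ x : E3, Gg lam j x * Gg lam k x * pdR j (pdR k w) x)
      = - ∫ x : E3, (Mm lam j j x * Gg lam k x + Gg lam j x * Mm lam j k x) * pdR k w x :=
  ibp j (f := fun x => Gg lam j x * Gg lam k x)
    (f' := fun x => Mm lam j j x * Gg lam k x + Gg lam j x * Mm lam j k x)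
    ((diff_Gg lam j).mul (diff_Gg lam k))
    (pd_GG lam j k)
    (((cont_Mm lam j j).mul (cont_Gg lam k)).add ((cont_Gg lam j).mul (cont_Mm lam j k)))
    (contDiff_pdR hw k) (hcs_pdR hsupp k)

lemma chainC (k : Fin 3) :
    (∫ x : E3, Vv lam x ^ 6 * pdR k (pdR k w) x)
      = - ∫ x : E3, (6 * Vv lam x ^ 5 * Gg lam k x) * pdR k w x :=
  ibp k (f := fun x => Vv lam x ^ 6)
    (f' := fun x => 6 * Vv lam x ^ 5 * Gg lam k x)
    ((diff_Vv lam).pow 6)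
    (fun x => by rw [pd_Vpow]; norm_num)
    ((continuous_const.mul ((cont_Vv lam).pow 5)).mul (cont_Gg lam k))
    (contDiff_pdR hw k) (hcs_pdR hsupp k)

lemma chainD (k : Fin 3) :
    (∫ x : E3, (∑ j, Gg lam j x ^ 2) * pdR k (pdR k w) x)
      = - ∫ x : E3, (∑ j, 2 * Gg lam j x * Mm lam k j x) * pdR k w x :=
  ibp k (f := fun x => ∑ j, Gg lam j x ^ 2)
    (f' := fun x => ∑ j, 2 * Gg lam j x * Mm lam k j x)
    (Differentiable.fun_sum (fun j _ => (diff_Gg lam j).pow 2))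
    (pd_gradSq lam k)
    (continuous_finset_sum _ (fun j _ =>
      (continuous_const.mul (cont_Gg lam j)).mul (cont_Mm lam k j)))
    (contDiff_pdR hw k) (hcs_pdR hsupp k)

lemma sum_to_lap (F : E3 → ℝ) (hF : Continuous F) :
    (∑ k, ∫ x : E3, F x * pdR k (pdR k w) x) = ∫ x : E3, F x * lapR w x := by
  rw [← integral_finset_sum _ (fun k _ => integrable_mul_cs hF
    (contDiff_pdR (contDiff_pdR hw k) k).continuous (hcs_pdR (hcs_pdR hsupp k) k))]
  congr 1
  funext x
  rw [← Finset.mul_sum]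
  rfl

end Chains

end VirialAux

open VirialAux

/-- Vanishing of the critical localized virial functional at rescaled ground states. -/
theorem virial_vanishes_on_ground_states (w : E3 → ℝ) (hw : ContDiff ℝ (⊤ : ℕ∞) w)
    (hsupp : HasCompactSupport w) (lam : ℝ) (hlam : 0 < lam) :
    (∫ x : E3,
      (-(lapR (lapR w) x) * (Real.sqrt lam * W (lam • x)) ^ 2
        + 4 * ∑ j, ∑ k, pdR j (fun y => Real.sqrt lam * W (lam • y)) x
            * pdR k (fun y => Real.sqrt lam * W (lam • y)) x * pdR j (pdR k w) x
        - 4/3 * lapR w x * (Real.sqrt lam * W (lam • x)) ^ 6)) = 0 := by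
  simp only [Vv_eq, pd_Vv]
  have cV2 : Continuous fun x : E3 => Vv lam x ^ 2 := (cont_Vv lam).pow 2
  have cV6 : Continuous fun x : E3 => Vv lam x ^ 6 := (cont_Vv lam).pow 6
  have cgq : Continuous fun x : E3 => ∑ j, Gg lam j x ^ 2 :=
    continuous_finset_sum _ fun j _ => (cont_Gg lam j).pow 2
  have IntJG : Integrable (fun x : E3 => (∑ j, Gg lam j x ^ 2) * lapR w x) :=
    integrable_mul_cs cgq (contDiff_lapR hw).continuous (hcs_lapR hsupp)
  have IntJ6 : Integrable (fun x : E3 => Vv lam x ^ 6 * lapR w x) :=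
    integrable_mul_cs cV6 (contDiff_lapR hw).continuous (hcs_lapR hsupp)
  have IntA : Integrable (fun x : E3 => lapR (lapR w) x * Vv lam x ^ 2) :=
    integrable_cs_mul (contDiff_lapR (contDiff_lapR hw)).continuous
      (hcs_lapR (hcs_lapR hsupp)) cV2
  have IntB : Integrable (fun x : E3 => ∑ j, ∑ k, Gg lam j x * Gg lam k x * pdR j (pdR k w) x) :=
    integrable_finset_sum _ fun j _ => integrable_finset_sum _ fun k _ =>
      integrable_mul_cs ((cont_Gg lam j).mul (cont_Gg lam k))
        (contDiff_pdR (contDiff_pdR hw k) j).continuous (hcs_pdR (hcs_pdR hsupp k) j)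
  have IntC : Integrable (fun x : E3 => lapR w x * Vv lam x ^ 6) :=
    integrable_cs_mul (contDiff_lapR hw).continuous (hcs_lapR hsupp) cV6
  have hA : (∫ x : E3, lapR (lapR w) x * Vv lam x ^ 2)
      = 2 * (∫ x : E3, (∑ j, Gg lam j x ^ 2) * lapR w x)
        - 2 * (∫ x : E3, Vv lam x ^ 6 * lapR w x) := by
    have e1 : (fun x : E3 => lapR (lapR w) x * Vv lam x ^ 2)
        = fun x => ∑ i, Vv lam x ^ 2 * pdR i (pdR i (lapR w)) x := by
      funext x
      rw [show lapR (lapR w) x = ∑ i, pdR i (pdR i (lapR w)) x from rfl, Finset.sum_mul]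
      exact Finset.sum_congr rfl fun i _ => mul_comm _ _
    rw [e1, integral_finset_sum _ (fun i _ => integrable_mul_cs cV2
      (contDiff_pdR (contDiff_pdR (contDiff_lapR hw) i) i).continuous
      (hcs_pdR (hcs_pdR (hcs_lapR hsupp) i) i))]
    rw [Finset.sum_congr rfl (fun i _ => chainA hw hsupp lam i)]
    rw [← integral_finset_sum _ (fun i _ => (show Integrable (fun x : E3 =>
      (2 * Gg lam i x ^ 2 + 2 * Vv lam x * Mm lam i i x) * lapR w x) from integrable_mul_cs
      ((continuous_const.mul ((cont_Gg lam i).pow 2)).add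
        ((continuous_const.mul (cont_Vv lam)).mul (cont_Mm lam i i)))
      (contDiff_lapR hw).continuous (hcs_lapR hsupp)))]
    have e2 : (fun x : E3 => ∑ i, (2 * Gg lam i x ^ 2 + 2 * Vv lam x * Mm lam i i x) * lapR w x)
        = fun x => 2 * ((∑ j, Gg lam j x ^ 2) * lapR w x) - 2 * (Vv lam x ^ 6 * lapR w x) := by
      funext x
      rw [← Finset.sum_mul, Finset.sum_add_distrib, ← Finset.mul_sum, ← Finset.mul_sum,
        sum_Mm lam hlam]
      ring
    rw [e2, integral_sub (IntJG.const_mul 2) (IntJ6.const_mul 2), integral_const_mul,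
      integral_const_mul]
  have hB : (∫ x : E3, ∑ j, ∑ k, Gg lam j x * Gg lam k x * pdR j (pdR k w) x)
      = 1/2 * (∫ x : E3, (∑ j, Gg lam j x ^ 2) * lapR w x)
        - 1/6 * (∫ x : E3, Vv lam x ^ 6 * lapR w x) := by
    have intjk : ∀ j k : Fin 3,
        Integrable (fun x : E3 => Gg lam j x * Gg lam k x * pdR j (pdR k w) x) := fun j k =>
      integrable_mul_cs ((cont_Gg lam j).mul (cont_Gg lam k))
        (contDiff_pdR (contDiff_pdR hw k) j).continuous (hcs_pdR (hcs_pdR hsupp k) j)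
    rw [integral_finset_sum _ (fun j _ => integrable_finset_sum _ (fun k _ => intjk j k))]
    rw [Finset.sum_congr rfl (fun j _ => integral_finset_sum _ (fun k _ => intjk j k))]
    rw [Finset.sum_congr rfl (fun j _ =>
      Finset.sum_congr rfl (fun k _ => chainB hw hsupp lam j k))]
    rw [Finset.sum_comm]
    have step_k : ∀ k : Fin 3,
        (∑ j, - ∫ x : E3, (Mm lam j j x * Gg lam k x + Gg lam j x * Mm lam j k x) * pdR k w x)
          = -(1/6) * (∫ x : E3, Vv lam x ^ 6 * pdR k (pdR k w) x)
            + 1/2 * (∫ x : E3, (∑ j, Gg lam j x ^ 2) * pdR k (pdR k w) x) := by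
      intro k
      have c1 : (∫ x : E3, (6 * Vv lam x ^ 5 * Gg lam k x) * pdR k w x)
          = - ∫ x : E3, Vv lam x ^ 6 * pdR k (pdR k w) x := by
        have := chainC hw hsupp lam k; linarith
      have c2 : (∫ x : E3, (∑ j, 2 * Gg lam j x * Mm lam k j x) * pdR k w x)
          = - ∫ x : E3, (∑ j, Gg lam j x ^ 2) * pdR k (pdR k w) x := by
        have := chainD hw hsupp lam k; linarith
      rw [Finset.sum_neg_distrib]
      rw [← integral_finset_sum _ (fun j _ => (show Integrable (fun x : E3 =>
        (Mm lam j j x * Gg lam k x + Gg lam j x * Mm lam j k x) * pdR k w x) from integrable_mul_cs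
        (((cont_Mm lam j j).mul (cont_Gg lam k)).add ((cont_Gg lam j).mul (cont_Mm lam j k)))
        (contDiff_pdR hw k).continuous (hcs_pdR hsupp k)))]
      have e3 : (fun x : E3 =>
            ∑ j, (Mm lam j j x * Gg lam k x + Gg lam j x * Mm lam j k x) * pdR k w x)
          = fun x => -(1/6) * ((6 * Vv lam x ^ 5 * Gg lam k x) * pdR k w x)
              + 1/2 * ((∑ j, 2 * Gg lam j x * Mm lam k j x) * pdR k w x) := by
        funext x
        rw [← Finset.sum_mul, Finset.sum_add_distrib, ← Finset.sum_mul, sum_Mm lam hlam]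
        have hsym : (∑ j, Gg lam j x * Mm lam j k x) = ∑ j, Gg lam j x * Mm lam k j x :=
          Finset.sum_congr rfl fun j _ => by rw [Mm_symm]
        rw [hsym]
        have h2 : (∑ j, 2 * Gg lam j x * Mm lam k j x)
            = 2 * ∑ j, Gg lam j x * Mm lam k j x := by
          rw [Finset.mul_sum]
          exact Finset.sum_congr rfl fun j _ => by ring
        rw [h2]
        ring
      rw [e3]
      have hh := integral_add
        (show Integrable (fun x : E3 => -(1/6) * ((6 * Vv lam x ^ 5 * Gg lam k x) * pdR k w x)) from
        (integrable_mul_cs ((continuous_const.mul ((cont_Vv lam).pow 5)).mul (cont_Gg lam k))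
          (contDiff_pdR hw k).continuous (hcs_pdR hsupp k)).const_mul _)
        (show Integrable (fun x : E3 => 1/2 * ((∑ j, 2 * Gg lam j x * Mm lam k j x) * pdR k w x)) from
        (integrable_mul_cs (continuous_finset_sum _ (fun j _ =>
            (continuous_const.mul (cont_Gg lam j)).mul (cont_Mm lam k j)))
          (contDiff_pdR hw k).continuous (hcs_pdR hsupp k)).const_mul _)
      rw [hh]
      rw [integral_const_mul, integral_const_mul, c1, c2]
      ring
    rw [Finset.sum_congr rfl (fun k _ => step_k k)]
    rw [Finset.sum_add_distrib, ← Finset.mul_sum, ← Finset.mul_sum]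
    rw [sum_to_lap hw hsupp (fun x => Vv lam x ^ 6) ((cont_Vv lam).pow 6),
      sum_to_lap hw hsupp (fun x => ∑ j, Gg lam j x ^ 2)
        (continuous_finset_sum _ (fun j _ => (cont_Gg lam j).pow 2))]
    ring
  have hC : (∫ x : E3, lapR w x * Vv lam x ^ 6) = ∫ x : E3, Vv lam x ^ 6 * lapR w x := by
    congr 1; funext x; ring
  rw [show (fun x : E3 =>
        -lapR (lapR w) x * Vv lam x ^ 2 +
          4 * ∑ j, ∑ k, Gg lam j x * Gg lam k x * pdR j (pdR k w) x -
        4 / 3 * lapR w x * Vv lam x ^ 6)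
      = fun x : E3 =>
        (-(lapR (lapR w) x * Vv lam x ^ 2) +
          4 * ∑ j, ∑ k, Gg lam j x * Gg lam k x * pdR j (pdR k w) x) -
        4 / 3 * (lapR w x * Vv lam x ^ 6) from funext fun x => by ring]
  have h1a : Integrable (fun x : E3 => -(lapR (lapR w) x * Vv lam x ^ 2)) := by
    exact IntA.neg
  have h1b : Integrable (fun x : E3 =>
      4 * ∑ j, ∑ k, Gg lam j x * Gg lam k x * pdR j (pdR k w) x) := IntB.const_mul 4
  have h1 : Integrable (fun x : E3 =>
      -(lapR (lapR w) x * Vv lam x ^ 2) +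
        4 * ∑ j, ∑ k, Gg lam j x * Gg lam k x * pdR j (pdR k w) x) := h1a.add h1b
  have h2 : Integrable (fun x : E3 => 4 / 3 * (lapR w x * Vv lam x ^ 6)) :=
    IntC.const_mul (4/3)
  rw [integral_sub h1 h2, integral_add h1a h1b, integral_neg, integral_const_mul,
    integral_const_mul]
  rw [hA, hB, hC]
  ring
end
end

section
/- Bounded mass forces the modulation scale to be large: for every M > 0 and R ≥ 1 there exists ε > 0 such that there is no continuously differentiable f : ℝ³ → ℂ with f ∈ L²(ℝ³), ‖f‖_{L²} ≤ M, together with θ ∈ ℝ and μ ∈ (0, R], satisfying ‖∇( f − e^{iθ} μ^{1/2} W(μ·) )‖_{L²} < ε. -/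
open MeasureTheory Complex
open scoped BigOperators ENNReal

noncomputable section

/-- The rescaled, rotated ground state `e^{iθ} μ^{1/2} W(μ·)`. -/
def groundC (θ μ : ℝ) (x : E3) : ℂ :=
  Complex.exp (θ * Complex.I) * (Real.sqrt μ : ℂ) * (W (μ • x) : ℂ)

/-! ### Auxiliary lemmas -/

namespace BMFLS

lemma rpow_neg_half_eq {x : ℝ} (hx : 0 < x) : x ^ (-(1:ℝ)/2) = (Real.sqrt x)⁻¹ := by
  rw [Real.sqrt_eq_rpow, ← Real.rpow_neg hx.le]; norm_num

lemma invsqrt_diff_ge {a b : ℝ} (ha : 0 < a) (hab : a ≤ b) :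
    (b - a) / (2 * b * Real.sqrt b) ≤ a ^ (-(1:ℝ)/2) - b ^ (-(1:ℝ)/2) := by
  have hb : 0 < b := ha.trans_le hab
  have hsa : 0 < Real.sqrt a := Real.sqrt_pos.2 ha
  have hsb : 0 < Real.sqrt b := Real.sqrt_pos.2 hb
  have hsab : Real.sqrt a ≤ Real.sqrt b := Real.sqrt_le_sqrt hab
  have ha2 : Real.sqrt a ^ 2 = a := Real.sq_sqrt ha.le
  have hb2 : Real.sqrt b ^ 2 = b := Real.sq_sqrt hb.le
  rw [rpow_neg_half_eq ha, rpow_neg_half_eq hb]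
  have key : (Real.sqrt a)⁻¹ - (Real.sqrt b)⁻¹
      = (b - a) / (Real.sqrt a * Real.sqrt b * (Real.sqrt b + Real.sqrt a)) := by
    rw [eq_div_iff (by positivity)]
    field_simp
    linear_combination hb2 - ha2
  rw [key]
  apply div_le_div_of_nonneg_left (by linarith) (by positivity)
  have t1 : Real.sqrt a * Real.sqrt b ≤ b := by nlinarith
  have t2 : Real.sqrt b + Real.sqrt a ≤ 2 * Real.sqrt b := by linarith
  calc Real.sqrt a * Real.sqrt b * (Real.sqrt b + Real.sqrt a)
      ≤ b * (2 * Real.sqrt b) := mul_le_mul t1 t2 (by positivity) hb.le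
    _ = 2 * b * Real.sqrt b := by ring

set_option maxHeartbeats 1000000 in
lemma caseA_gap {τ y0 y1 y2 : ℝ} (hτ0 : 0 < τ) (hτ : τ ≤ 100)
    (h0 : y0 ∈ Set.Icc (1:ℝ) 2) (h1 : y1 ∈ Set.Icc (-(1/2):ℝ) (1/2))
    (h2 : y2 ∈ Set.Icc (-(1/2):ℝ) (1/2)) :
    τ / 620000 ≤ (1 + (y0^2+y1^2+y2^2)/3) ^ (-(1:ℝ)/2)
      - (1 + ((y0+τ)^2+y1^2+y2^2)/3) ^ (-(1:ℝ)/2) := by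
  obtain ⟨h0l, h0r⟩ := h0; obtain ⟨h1l, h1r⟩ := h1; obtain ⟨h2l, h2r⟩ := h2
  have hp1 : (0:ℝ) ≤ (102 - (y0+τ)) * (102 + (y0+τ)) :=
    mul_nonneg (by linarith) (by linarith)
  have hp2 : (0:ℝ) ≤ (1/2 - y1) * (1/2 + y1) := mul_nonneg (by linarith) (by linarith)
  have hp3 : (0:ℝ) ≤ (1/2 - y2) * (1/2 + y2) := mul_nonneg (by linarith) (by linarith)
  have hp4 : τ ≤ y0 * τ := by nlinarith
  have ha : (0:ℝ) < 1 + (y0^2+y1^2+y2^2)/3 := by positivity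
  have hab : 1 + (y0^2+y1^2+y2^2)/3 ≤ 1 + ((y0+τ)^2+y1^2+y2^2)/3 := by nlinarith
  have hkey := invsqrt_diff_ge ha hab
  refine le_trans ?_ hkey
  have hba0 : 2*τ/3 ≤ (1 + ((y0+τ)^2+y1^2+y2^2)/3) - (1 + (y0^2+y1^2+y2^2)/3) := by nlinarith
  have hbb0 : (1 + ((y0+τ)^2+y1^2+y2^2)/3) ≤ 3481 := by nlinarith
  set a := 1 + (y0^2+y1^2+y2^2)/3
  set b := 1 + ((y0+τ)^2+y1^2+y2^2)/3 with hbdef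
  have hb : (0:ℝ) < b := lt_of_lt_of_le ha hab
  have hbb : b ≤ 3481 := hbb0
  have hsb : Real.sqrt b ≤ 59 := by
    rw [show (59:ℝ) = Real.sqrt 3481 by
      rw [show (3481:ℝ) = 59^2 by norm_num, Real.sqrt_sq (by norm_num)]]
    exact Real.sqrt_le_sqrt hbb
  have hba : 2*τ/3 ≤ b - a := hba0
  have hsb0 : (0:ℝ) ≤ Real.sqrt b := Real.sqrt_nonneg b
  have hden : (0:ℝ) < 2 * b * Real.sqrt b := by positivity
  calc τ / 620000 ≤ (2*τ/3) / (2 * 3481 * 59) := by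
        rw [div_le_div_iff₀ (by norm_num) (by norm_num)]; nlinarith
    _ ≤ (b - a) / (2 * b * Real.sqrt b) := by
        apply div_le_div₀ (by linarith) hba hden
        nlinarith [mul_le_mul hbb hsb (Real.sqrt_nonneg b) (by norm_num : (0:ℝ) ≤ 3481)]

lemma caseB_gap {τ y0 y1 y2 : ℝ} (hτ : 100 ≤ τ)
    (h0 : |y0| ≤ τ/20) (h1 : |y1| ≤ τ/20) (h2 : |y2| ≤ τ/20) :
    17 / τ ≤ (1 + (y0^2+y1^2+y2^2)/3) ^ (-(1:ℝ)/2)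
      - (1 + ((y0+τ)^2+y1^2+y2^2)/3) ^ (-(1:ℝ)/2) := by
  have hτ0 : (0:ℝ) < τ := by linarith
  obtain ⟨h0l, h0r⟩ := abs_le.1 h0
  obtain ⟨h1l, h1r⟩ := abs_le.1 h1
  obtain ⟨h2l, h2r⟩ := abs_le.1 h2
  have ha : (0:ℝ) < 1 + (y0^2+y1^2+y2^2)/3 := by positivity
  have hb : (0:ℝ) < 1 + ((y0+τ)^2+y1^2+y2^2)/3 := by positivity
  have hsa : Real.sqrt (1 + (y0^2+y1^2+y2^2)/3) ≤ τ/19 := by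
    rw [show τ/19 = Real.sqrt ((τ/19)^2) by rw [Real.sqrt_sq (by positivity)]]
    apply Real.sqrt_le_sqrt
    have e0 : y0^2 ≤ (τ/20)^2 := sq_le_sq' h0l h0r
    have e1 : y1^2 ≤ (τ/20)^2 := sq_le_sq' h1l h1r
    have e2 : y2^2 ≤ (τ/20)^2 := sq_le_sq' h2l h2r
    nlinarith [sq_nonneg τ]
  have hsb : 19*τ/35 ≤ Real.sqrt (1 + ((y0+τ)^2+y1^2+y2^2)/3) := by
    rw [show 19*τ/35 = Real.sqrt ((19*τ/35)^2) by rw [Real.sqrt_sq (by positivity)]]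
    apply Real.sqrt_le_sqrt
    have : 19*τ/20 ≤ y0 + τ := by linarith
    nlinarith [sq_nonneg y1, sq_nonneg y2]
  rw [rpow_neg_half_eq ha, rpow_neg_half_eq hb]
  have hsa0 : 0 < Real.sqrt (1 + (y0^2+y1^2+y2^2)/3) := Real.sqrt_pos.2 ha
  have hsb0 : 0 < Real.sqrt (1 + ((y0+τ)^2+y1^2+y2^2)/3) := Real.sqrt_pos.2 hb
  have e1 : 19/τ ≤ (Real.sqrt (1 + (y0^2+y1^2+y2^2)/3))⁻¹ := by
    rw [show 19/τ = (τ/19)⁻¹ by rw [inv_div]]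
    exact inv_anti₀ hsa0 hsa
  have e2 : (Real.sqrt (1 + ((y0+τ)^2+y1^2+y2^2)/3))⁻¹ ≤ 35/(19*τ) := by
    rw [show 35/(19*τ) = (19*τ/35)⁻¹ by rw [inv_div]]
    exact inv_anti₀ (by positivity) hsb
  have e3 : 35/(19*τ) ≤ 2/τ := by
    rw [div_le_div_iff₀ (by positivity) hτ0]; nlinarith
  have e4 : 19/τ - 2/τ = 17/τ := by ring
  linarith

lemma sq_eLpNorm_two (h : E3 → ℂ) :
    eLpNorm h 2 volume ^ 2 = ∫⁻ x, (‖h x‖₊ : ℝ≥0∞) ^ 2 := by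
  rw [eLpNorm_eq_lintegral_rpow_enorm_toReal two_ne_zero ENNReal.ofNat_ne_top]
  simp only [enorm_eq_nnnorm]
  rw [← ENNReal.rpow_natCast _ 2, ← ENNReal.rpow_mul]
  have : ∫⁻ x, (‖h x‖₊ : ℝ≥0∞) ^ (ENNReal.toReal 2) = ∫⁻ x, (‖h x‖₊ : ℝ≥0∞) ^ 2 := by
    apply lintegral_congr; intro x
    rw [← ENNReal.rpow_natCast _ 2]
    norm_num
  rw [this]
  norm_num

lemma ennreal_le_of_sq_le_sq {X Y : ℝ≥0∞} (h : X^2 ≤ Y^2) : X ≤ Y := by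
  have h2 := ENNReal.rpow_le_rpow (z := 1/2) h (by norm_num)
  rw [← ENNReal.rpow_natCast X 2, ← ENNReal.rpow_natCast Y 2, ← ENNReal.rpow_mul,
    ← ENNReal.rpow_mul] at h2
  norm_num at h2
  exact h2

lemma volume_box (lo hi : Fin 3 → ℝ) :
    volume {x : E3 | ∀ i, x i ∈ Set.Icc (lo i) (hi i)} = ∏ i, ENNReal.ofReal (hi i - lo i) := by
  have hmp := EuclideanSpace.volume_preserving_symm_measurableEquiv_toLp (Fin 3)
  have hset : {x : E3 | ∀ i, x i ∈ Set.Icc (lo i) (hi i)} =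
      (MeasurableEquiv.toLp 2 (Fin 3 → ℝ)).symm ⁻¹' (Set.Icc lo hi) := by
    ext x
    simp [Set.mem_Icc, Pi.le_def, forall_and]
  rw [hset, hmp.measure_preimage measurableSet_Icc.nullMeasurableSet]
  exact Real.volume_Icc_pi

lemma W_coords (y : E3) : W y = (1 + (y 0 ^ 2 + y 1 ^ 2 + y 2 ^ 2) / 3) ^ (-(1 : ℝ) / 2) := by
  have : ‖y‖ ^ 2 = y 0 ^ 2 + y 1 ^ 2 + y 2 ^ 2 := by
    rw [EuclideanSpace.norm_eq, Real.sq_sqrt (by positivity)]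
    simp [Fin.sum_univ_three, sq_abs]
  rw [W, this]

lemma coords_shift (y : E3) (τ : ℝ) :
    (y + τ • e3 0) 0 = y 0 + τ ∧ (y + τ • e3 0) 1 = y 1 ∧ (y + τ • e3 0) 2 = y 2 := by
  refine ⟨?_, ?_, ?_⟩ <;> simp [e3, EuclideanSpace.single_apply]

lemma lintegral_sq_CS {t : ℝ} (w : ℝ → ℝ≥0∞) (hw : Measurable w) :
    (∫⁻ s in Set.Ioc 0 t, w s) ^ 2 ≤ ENNReal.ofReal t * ∫⁻ s in Set.Ioc 0 t, (w s) ^ 2 := by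
  set ν := volume.restrict (Set.Ioc (0:ℝ) t)
  have h := ENNReal.lintegral_mul_le_Lp_mul_Lq ν (p := 2) (q := 2)
    ⟨by norm_num, by norm_num, by norm_num⟩ hw.aemeasurable aemeasurable_const (g := fun _ => 1)
  simp only [Pi.mul_apply, mul_one, ENNReal.one_rpow] at h
  have hν : ∫⁻ _ : ℝ, (1:ℝ≥0∞) ∂ν = ENNReal.ofReal t := by
    simp [ν, Real.volume_Ioc]
  rw [hν] at h
  have h2 : (∫⁻ s, w s ∂ν) ^ 2 ≤
      ((∫⁻ s, w s ^ (2:ℝ) ∂ν) ^ (1/(2:ℝ)) * ENNReal.ofReal t ^ (1/(2:ℝ))) ^ 2 :=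
    pow_le_pow_left' h 2
  calc (∫⁻ s, w s ∂ν) ^ 2 ≤ _ := h2
    _ = (∫⁻ s, w s ^ (2:ℝ) ∂ν) * ENNReal.ofReal t := by
        rw [mul_pow, ← ENNReal.rpow_natCast (_ ^ (1/(2:ℝ))) 2,
          ← ENNReal.rpow_natCast (ENNReal.ofReal t ^ (1/(2:ℝ))) 2,
          ← ENNReal.rpow_mul, ← ENNReal.rpow_mul]
        norm_num
    _ = ENNReal.ofReal t * ∫⁻ s, w s ^ 2 ∂ν := by
        rw [mul_comm]; congr 1; apply lintegral_congr; intro s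
        rw [← ENNReal.rpow_natCast (w s) 2]; norm_num

lemma translate_sq_lintegral_le {g : E3 → ℂ} (hg : ContDiff ℝ 1 g) {t : ℝ} (ht : 0 < t) :
    (∫⁻ x, (‖g (x + t • e3 0) - g x‖₊ : ℝ≥0∞) ^ 2) ≤
      ENNReal.ofReal t ^ 2 * ∫⁻ x, (‖fderiv ℝ g x (e3 0)‖₊ : ℝ≥0∞) ^ 2 := by
  set e := e3 0 with he
  set D : E3 → ℂ := fun z => fderiv ℝ g z e with hD
  have hgd : Differentiable ℝ g := hg.differentiable one_ne_zero
  have hDc : Continuous D := (hg.continuous_fderiv one_ne_zero).clm_apply continuous_const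
  have hftc : ∀ x : E3, g (x + t • e) - g x = ∫ s in (0:ℝ)..t, D (x + s • e) := by
    intro x
    have hder : ∀ s ∈ Set.uIcc (0:ℝ) t,
        HasDerivAt (fun s : ℝ => g (x + s • e)) (D (x + s • e)) s := by
      intro s _
      have hline : HasDerivAt (fun s : ℝ => x + s • e) e s := by
        simpa using ((hasDerivAt_id s).smul_const e).const_add x
      have := ((hgd (x + s • e)).hasFDerivAt).comp_hasDerivAt s hline
      exact this
    have hint : IntervalIntegrable (fun s => D (x + s • e)) volume 0 t :=
      (hDc.comp (by continuity)).intervalIntegrable 0 t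
    rw [intervalIntegral.integral_eq_sub_of_hasDerivAt hder hint]
    simp
  have hCS : ∀ x : E3, (‖g (x + t • e) - g x‖₊ : ℝ≥0∞) ^ 2 ≤
      ENNReal.ofReal t * ∫⁻ s in Set.Ioc 0 t, (‖D (x + s • e)‖₊ : ℝ≥0∞) ^ 2 := by
    intro x
    have hcont : Continuous fun s : ℝ => D (x + s • e) := hDc.comp (by continuity)
    have h1 : ‖g (x + t • e) - g x‖ ≤ ∫ s in Set.Ioc 0 t, ‖D (x + s • e)‖ := by
      rw [hftc x]
      calc ‖∫ s in (0:ℝ)..t, D (x + s • e)‖ ≤ ∫ s in (0:ℝ)..t, ‖D (x + s • e)‖ :=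
            intervalIntegral.norm_integral_le_integral_norm ht.le
        _ = _ := intervalIntegral.integral_of_le ht.le
    have h2 : (‖g (x + t • e) - g x‖₊ : ℝ≥0∞) ≤
        ∫⁻ s in Set.Ioc 0 t, (‖D (x + s • e)‖₊ : ℝ≥0∞) := by
      rw [← enorm_eq_nnnorm, ← ofReal_norm]
      calc ENNReal.ofReal ‖g (x + t • e) - g x‖ ≤
          ENNReal.ofReal (∫ s in Set.Ioc 0 t, ‖D (x + s • e)‖) := ENNReal.ofReal_le_ofReal h1
        _ = _ := by
          exact ofReal_integral_norm_eq_lintegral_enorm ((hcont.integrableOn_Icc (a := 0) (b := t)).mono_set Set.Ioc_subset_Icc_self)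
    calc (‖g (x + t • e) - g x‖₊ : ℝ≥0∞) ^ 2
        ≤ (∫⁻ s in Set.Ioc 0 t, (‖D (x + s • e)‖₊ : ℝ≥0∞)) ^ 2 := pow_le_pow_left' h2 2
      _ ≤ ENNReal.ofReal t * ∫⁻ s in Set.Ioc 0 t, (‖D (x + s • e)‖₊ : ℝ≥0∞) ^ 2 :=
          lintegral_sq_CS _ ((hcont.nnnorm.measurable).coe_nnreal_ennreal)
  calc (∫⁻ x, (‖g (x + t • e) - g x‖₊ : ℝ≥0∞) ^ 2)
      ≤ ∫⁻ x, ENNReal.ofReal t * ∫⁻ s in Set.Ioc 0 t, (‖D (x + s • e)‖₊ : ℝ≥0∞) ^ 2 :=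
        lintegral_mono hCS
    _ = ENNReal.ofReal t * ∫⁻ x, ∫⁻ s in Set.Ioc 0 t, (‖D (x + s • e)‖₊ : ℝ≥0∞) ^ 2 :=
        lintegral_const_mul' _ _ ENNReal.ofReal_ne_top
    _ = ENNReal.ofReal t * ∫⁻ s in Set.Ioc 0 t, ∫⁻ x, (‖D (x + s • e)‖₊ : ℝ≥0∞) ^ 2 := by
        congr 1
        apply lintegral_lintegral_swap
        have hm : Measurable fun p : E3 × ℝ => (‖D (p.1 + p.2 • e)‖₊ : ℝ≥0∞) ^ 2 := by
          have hmm : Measurable fun p : E3 × ℝ => ‖D (p.1 + p.2 • e)‖₊ :=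
            ((hDc.comp (continuous_fst.add (continuous_snd.smul continuous_const))).nnnorm).measurable
          exact hmm.coe_nnreal_ennreal.pow_const 2
        exact hm.aemeasurable
    _ = ENNReal.ofReal t * ∫⁻ s in Set.Ioc 0 t, ∫⁻ x, (‖D x‖₊ : ℝ≥0∞) ^ 2 := by
        congr 1; apply lintegral_congr; intro s
        exact lintegral_add_right_eq_self (fun x => (‖D x‖₊ : ℝ≥0∞) ^ 2) (s • e)
    _ = ENNReal.ofReal t ^ 2 * ∫⁻ x, (‖D x‖₊ : ℝ≥0∞) ^ 2 := by
        rw [lintegral_const (μ := volume.restrict (Set.Ioc (0:ℝ) t))]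
        simp [Real.volume_Ioc, Measure.restrict_apply, sq]
        ring

end BMFLS

open BMFLS

set_option maxHeartbeats 4000000 in
/-- Bounded mass forces the modulation scale to be large. -/
theorem bounded_mass_forces_large_scale :
    ∀ M > (0:ℝ), ∀ R ≥ (1:ℝ), ∃ ε > (0:ℝ),
      ¬ ∃ (f : E3 → ℂ) (θ μ : ℝ), ContDiff ℝ 1 f ∧
        Integrable (fun x : E3 => ‖f x‖ ^ 2) ∧
        Real.sqrt (∫ x : E3, ‖f x‖ ^ 2) ≤ M ∧
        0 < μ ∧ μ ≤ R ∧
        Integrable (gradSqC (fun x => f x - groundC θ μ x)) ∧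
        Real.sqrt (∫ x : E3, gradSqC (fun x => f x - groundC θ μ x) x) < ε := by
  intro M hM R hR
  have hR0 : (0:ℝ) < R := lt_of_lt_of_le one_pos hR
  have hM1 : (0:ℝ) < 2*M+1 := by linarith
  set K : ℝ := 620000 * (2*M+1) + 4*R*(2*M+1)^2 + 1 with hKdef
  have hK0 : 0 < K := by nlinarith [mul_pos hR0 (pow_pos hM1 2)]
  refine ⟨1/K, by positivity, ?_⟩
  rintro ⟨f, θ, μ, hf1, hfI, hfM, hμ0, hμR, hgI, hgε⟩
  have hμne : μ ≠ 0 := ne_of_gt hμ0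
  have hKne : K ≠ 0 := ne_of_gt hK0
  set g : E3 → ℂ := fun x => f x - groundC θ μ x with hgdef
  -- smoothness
  have hW1 : ContDiff ℝ 1 W := by
    rw [contDiff_iff_contDiffAt]
    intro x
    have h1 : ContDiffAt ℝ 1 (fun x : E3 => 1 + ‖x‖ ^ 2 / 3) x :=
      (contDiff_const.add ((contDiff_norm_sq ℝ (E := E3) (n := 1)).div_const 3)).contDiffAt
    have h2 : (1 + ‖x‖ ^ 2 / 3) ≠ 0 := by positivity
    exact h1.rpow_const_of_ne h2
  have hWc : ContDiff ℝ 1 fun x : E3 => ((W (μ • x) : ℝ) : ℂ) :=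
    Complex.ofRealCLM.contDiff.comp (hW1.comp (contDiff_const_smul μ))
  have hG : ContDiff ℝ 1 (groundC θ μ) := by
    unfold groundC
    exact (contDiff_const.mul contDiff_const).mul hWc
  have hg1 : ContDiff ℝ 1 g := hf1.sub hG
  set v : E3 := K • e3 0 with hvdef
  set τ : ℝ := μ * K with hτdef
  have hτ0 : 0 < τ := mul_pos hμ0 hK0
  have hfc : Continuous f := hf1.continuous
  have hfshift : Continuous fun x : E3 => f (x + v) :=
    hfc.comp (continuous_id.add continuous_const)
  have hGc : Continuous (groundC θ μ) := hG.continuous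
  have hgc : Continuous g := hg1.continuous
  have hgshift : Continuous fun x : E3 => g (x + v) :=
    hgc.comp (continuous_id.add continuous_const)
  -- mass bound
  have hmassf : ∫⁻ x, (‖f x‖₊ : ℝ≥0∞)^2 ≤ ENNReal.ofReal (M^2) := by
    have h1 : ENNReal.ofReal (∫ x, ‖f x‖^2) = ∫⁻ x, (‖f x‖₊ : ℝ≥0∞)^2 := by
      rw [ofReal_integral_eq_lintegral_ofReal hfI (Filter.Eventually.of_forall fun x => by positivity)]
      apply lintegral_congr; intro x
      rw [← enorm_eq_nnnorm, ← ofReal_norm, ← ENNReal.ofReal_pow (norm_nonneg _)]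
    rw [← h1]
    apply ENNReal.ofReal_le_ofReal
    have h0 : 0 ≤ ∫ x : E3, ‖f x‖^2 := integral_nonneg fun x => by positivity
    nlinarith [Real.sq_sqrt h0, Real.sqrt_nonneg (∫ x : E3, ‖f x‖^2)]
  have heLf : eLpNorm f 2 volume ≤ ENNReal.ofReal M := by
    apply ennreal_le_of_sq_le_sq
    rw [sq_eLpNorm_two, ← ENNReal.ofReal_pow hM.le]
    exact hmassf
  have hshift_eq : eLpNorm (fun x => f (x + v)) 2 volume = eLpNorm f 2 volume := by
    have hmp : MeasurePreserving (fun x : E3 => x + v) volume volume :=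
      measurePreserving_add_right volume v
    exact eLpNorm_comp_measurePreserving hfc.aestronglyMeasurable hmp
  have hTf : eLpNorm (fun x => f (x + v) - f x) 2 volume
      ≤ ENNReal.ofReal M + ENNReal.ofReal M := by
    calc eLpNorm (fun x => f (x + v) - f x) 2 volume
        ≤ eLpNorm (fun x => f (x + v)) 2 volume + eLpNorm f 2 volume :=
          eLpNorm_sub_le hfshift.aestronglyMeasurable hfc.aestronglyMeasurable one_le_two
      _ ≤ ENNReal.ofReal M + ENNReal.ofReal M :=
          add_le_add (le_trans (le_of_eq hshift_eq) heLf) heLf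
  -- gradient bound
  have hgrad_nonneg : ∀ x, 0 ≤ gradSqC g x := fun x =>
    Finset.sum_nonneg fun i _ => by positivity
  have hIg : ∫ x, gradSqC g x < (1/K)^2 := by
    have h0 : 0 ≤ ∫ x : E3, gradSqC g x := integral_nonneg hgrad_nonneg
    nlinarith [Real.sq_sqrt h0, Real.sqrt_nonneg (∫ x : E3, gradSqC g x), hgε,
      sq_nonneg (1/K - Real.sqrt (∫ x : E3, gradSqC g x))]
  have hDle : ∫⁻ x, (‖fderiv ℝ g x (e3 0)‖₊ : ℝ≥0∞)^2 ≤ ENNReal.ofReal ((1/K)^2) := by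
    have hpt : ∀ x : E3, (‖fderiv ℝ g x (e3 0)‖₊ : ℝ≥0∞)^2 ≤ ENNReal.ofReal (gradSqC g x) := by
      intro x
      rw [← enorm_eq_nnnorm, ← ofReal_norm, ← ENNReal.ofReal_pow (norm_nonneg _)]
      apply ENNReal.ofReal_le_ofReal
      have hh : ‖fderiv ℝ g x (e3 0)‖^2 = ‖pdC 0 g x‖^2 := rfl
      rw [hh, gradSqC]
      exact Finset.single_le_sum (f := fun i => ‖pdC i g x‖^2)
        (fun i _ => by positivity) (Finset.mem_univ 0)
    calc ∫⁻ x, (‖fderiv ℝ g x (e3 0)‖₊ : ℝ≥0∞)^2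
        ≤ ∫⁻ x, ENNReal.ofReal (gradSqC g x) := lintegral_mono hpt
      _ = ENNReal.ofReal (∫ x, gradSqC g x) :=
          (ofReal_integral_eq_lintegral_ofReal hgI
            (Filter.Eventually.of_forall hgrad_nonneg)).symm
      _ ≤ ENNReal.ofReal ((1/K)^2) := ENNReal.ofReal_le_ofReal hIg.le
  have hTgsq : ∫⁻ x, (‖g (x + v) - g x‖₊ : ℝ≥0∞)^2 ≤ ENNReal.ofReal 1 := by
    calc ∫⁻ x, (‖g (x + v) - g x‖₊ : ℝ≥0∞)^2
        ≤ ENNReal.ofReal K ^2 * ∫⁻ x, (‖fderiv ℝ g x (e3 0)‖₊ : ℝ≥0∞)^2 :=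
          translate_sq_lintegral_le hg1 hK0
      _ ≤ ENNReal.ofReal K ^2 * ENNReal.ofReal ((1/K)^2) := mul_le_mul_right hDle _
      _ = ENNReal.ofReal 1 := by
          rw [← ENNReal.ofReal_pow hK0.le, ← ENNReal.ofReal_mul (by positivity)]
          congr 1; field_simp
  have hTg : eLpNorm (fun x => g (x + v) - g x) 2 volume ≤ ENNReal.ofReal 1 := by
    apply ennreal_le_of_sq_le_sq
    rw [sq_eLpNorm_two]
    calc ∫⁻ x, (‖g (x + v) - g x‖₊ : ℝ≥0∞)^2 ≤ ENNReal.ofReal 1 := hTgsq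
      _ = ENNReal.ofReal 1 ^ 2 := by simp
  -- triangle inequality
  have hTG : eLpNorm (fun x => groundC θ μ (x + v) - groundC θ μ x) 2 volume
      ≤ ENNReal.ofReal (2*M+1) := by
    have hdecomp : (fun x : E3 => groundC θ μ (x + v) - groundC θ μ x)
        = fun x => (f (x + v) - f x) - (g (x + v) - g x) := by
      funext x; simp only [hgdef]; ring
    rw [hdecomp]
    calc eLpNorm (fun x => (f (x + v) - f x) - (g (x + v) - g x)) 2 volume
        ≤ eLpNorm (fun x => f (x + v) - f x) 2 volume
          + eLpNorm (fun x => g (x + v) - g x) 2 volume :=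
          eLpNorm_sub_le ((hfshift.sub hfc).aestronglyMeasurable)
            ((hgshift.sub hgc).aestronglyMeasurable) one_le_two
      _ ≤ (ENNReal.ofReal M + ENNReal.ofReal M) + ENNReal.ofReal 1 := add_le_add hTf hTg
      _ = ENNReal.ofReal (2*M+1) := by
          rw [← ENNReal.ofReal_add hM.le hM.le,
            ← ENNReal.ofReal_add (by linarith : (0:ℝ) ≤ M + M) zero_le_one]
          congr 1; ring
  have hUp : ∫⁻ x, (‖groundC θ μ (x + v) - groundC θ μ x‖₊ : ℝ≥0∞)^2
      ≤ ENNReal.ofReal ((2*M+1)^2) := by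
    rw [← sq_eLpNorm_two, ENNReal.ofReal_pow hM1.le]
    exact pow_le_pow_left' hTG 2
  -- pointwise formula for the ground-state difference
  have hyshift : ∀ x : E3, μ • (x + v) = μ • x + τ • e3 0 := by
    intro x; rw [hvdef, smul_add, smul_smul, hτdef]
  have hTGx : ∀ x : E3, (‖groundC θ μ (x + v) - groundC θ μ x‖₊ : ℝ≥0∞)^2
      = ENNReal.ofReal (μ * (W (μ • x) - W (μ • x + τ • e3 0))^2) := by
    intro x
    have h1 : groundC θ μ (x + v) - groundC θ μ x
        = Complex.exp (θ * Complex.I) * (Real.sqrt μ : ℂ)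
          * (((W (μ • x + τ • e3 0) - W (μ • x) : ℝ) : ℂ)) := by
      unfold groundC; rw [hyshift x]; push_cast; ring
    rw [← enorm_eq_nnnorm, ← ofReal_norm, ← ENNReal.ofReal_pow (norm_nonneg _), h1]
    congr 1
    rw [norm_mul, norm_mul, Complex.norm_exp_ofReal_mul_I, Complex.norm_real, Complex.norm_real,
      Real.norm_eq_abs, Real.norm_eq_abs, _root_.abs_of_nonneg (Real.sqrt_nonneg μ),
      one_mul, mul_pow, _root_.sq_abs, Real.sq_sqrt hμ0.le]
    ring
  have hTGmeas : Measurable fun x : E3 =>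
      (‖groundC θ μ (x + v) - groundC θ μ x‖₊ : ℝ≥0∞)^2 := by
    have hc : Continuous fun x : E3 => groundC θ μ (x + v) - groundC θ μ x :=
      (hGc.comp (continuous_id.add continuous_const)).sub hGc
    exact (hc.nnnorm.measurable).coe_nnreal_ennreal.pow_const 2
  -- lower bound, by cases on τ
  rcases le_total τ 100 with hcase | hcase
  · -- Case A : τ ≤ 100
    set lo : Fin 3 → ℝ := fun i => if i = 0 then 1/μ else -(1/(2*μ)) with hlo
    set hi : Fin 3 → ℝ := fun i => if i = 0 then 2/μ else 1/(2*μ) with hhi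
    set S := {x : E3 | ∀ i, x i ∈ Set.Icc (lo i) (hi i)} with hS
    have hw : ∀ i : Fin 3, hi i - lo i = 1/μ := by
      intro i
      by_cases h : i = 0
      · simp only [hlo, hhi, h, if_pos rfl]
        rw [div_sub_div_same]; norm_num
      · simp only [hlo, hhi, if_neg h]
        rw [sub_neg_eq_add, ← add_div,
          div_eq_div_iff (by positivity) (by positivity)]
        ring
    have hvol : volume S = ENNReal.ofReal (1/μ) ^ 3 := by
      rw [hS, volume_box]
      simp_rw [hw]
      simp [Finset.prod_const]
    have hptA : ∀ x ∈ S, ENNReal.ofReal (μ * (τ/620000)^2)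
        ≤ (‖groundC θ μ (x + v) - groundC θ μ x‖₊ : ℝ≥0∞)^2 := by
      intro x hx
      rw [hTGx x]
      apply ENNReal.ofReal_le_ofReal
      apply mul_le_mul_of_nonneg_left _ hμ0.le
      have hgap : τ/620000 ≤ W (μ • x) - W (μ • x + τ • e3 0) := by
        rw [W_coords (μ • x), W_coords (μ • x + τ • e3 0)]
        obtain ⟨c0, c1, c2⟩ := coords_shift (μ • x) τ
        rw [c0, c1, c2]
        have hx0 := hx 0; have hx1 := hx 1; have hx2 := hx 2
        simp only [hlo, hhi, if_pos rfl, Set.mem_Icc] at hx0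
        have h10 : (1 : Fin 3) ≠ 0 := by decide
        have h20 : (2 : Fin 3) ≠ 0 := by decide
        simp only [hlo, hhi, if_neg h10, Set.mem_Icc] at hx1
        simp only [hlo, hhi, if_neg h20, Set.mem_Icc] at hx2
        have hinv : μ * (1/μ) = 1 := by field_simp
        have hinv2 : μ * (1/(2*μ)) = 1/2 := by
          rw [mul_one_div, div_eq_div_iff (by positivity) (by norm_num)]; ring
        apply caseA_gap hτ0 hcase
        · constructor
          · have := mul_le_mul_of_nonneg_left hx0.1 hμ0.le
            show (1:ℝ) ≤ (μ • x) 0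
            calc (1:ℝ) = μ * (1/μ) := hinv.symm
              _ ≤ μ * x 0 := mul_le_mul_of_nonneg_left hx0.1 hμ0.le
              _ = (μ • x) 0 := rfl
          · show (μ • x) 0 ≤ 2
            calc (μ • x) 0 = μ * x 0 := rfl
              _ ≤ μ * (2/μ) := mul_le_mul_of_nonneg_left hx0.2 hμ0.le
              _ = 2 := by field_simp
        · constructor
          · show -(1/2:ℝ) ≤ (μ • x) 1
            calc -(1/2:ℝ) = μ * (-(1/(2*μ))) := by rw [mul_neg, hinv2]
              _ ≤ μ * x 1 := mul_le_mul_of_nonneg_left hx1.1 hμ0.le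
              _ = (μ • x) 1 := rfl
          · show (μ • x) 1 ≤ 1/2
            calc (μ • x) 1 = μ * x 1 := rfl
              _ ≤ μ * (1/(2*μ)) := mul_le_mul_of_nonneg_left hx1.2 hμ0.le
              _ = 1/2 := hinv2
        · constructor
          · show -(1/2:ℝ) ≤ (μ • x) 2
            calc -(1/2:ℝ) = μ * (-(1/(2*μ))) := by rw [mul_neg, hinv2]
              _ ≤ μ * x 2 := mul_le_mul_of_nonneg_left hx2.1 hμ0.le
              _ = (μ • x) 2 := rfl
          · show (μ • x) 2 ≤ 1/2
            calc (μ • x) 2 = μ * x 2 := rfl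
              _ ≤ μ * (1/(2*μ)) := mul_le_mul_of_nonneg_left hx2.2 hμ0.le
              _ = 1/2 := hinv2
      have hnn : 0 ≤ τ/620000 := by positivity
      exact pow_le_pow_left₀ hnn hgap 2
    have hlowA : ENNReal.ofReal ((K/620000)^2)
        ≤ ∫⁻ x, (‖groundC θ μ (x + v) - groundC θ μ x‖₊ : ℝ≥0∞)^2 := by
      have hle1 : ENNReal.ofReal ((K/620000)^2)
          ≤ ENNReal.ofReal (μ * (τ/620000)^2) * volume S := by
        rw [hvol, ← ENNReal.ofReal_pow (by positivity), ← ENNReal.ofReal_mul (by positivity)]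
        apply ENNReal.ofReal_le_ofReal
        apply le_of_eq
        rw [hτdef]; field_simp
      calc ENNReal.ofReal ((K/620000)^2) ≤ ENNReal.ofReal (μ * (τ/620000)^2) * volume S := hle1
        _ = ∫⁻ _ in S, ENNReal.ofReal (μ * (τ/620000)^2) := (setLIntegral_const S _).symm
        _ ≤ ∫⁻ x in S, (‖groundC θ μ (x + v) - groundC θ μ x‖₊ : ℝ≥0∞)^2 :=
            setLIntegral_mono hTGmeas hptA
        _ ≤ _ := setLIntegral_le_lintegral S _
    have hreal : (K/620000)^2 ≤ (2*M+1)^2 :=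
      (ENNReal.ofReal_le_ofReal_iff (by positivity)).1 (hlowA.trans hUp)
    have hKbig : 2*M+1 < K/620000 := by
      rw [lt_div_iff₀ (by norm_num)]
      have h4 : 0 < 4*R*(2*M+1)^2 := by positivity
      rw [hKdef]; linarith
    have hsq := pow_lt_pow_left₀ hKbig hM1.le two_ne_zero
    linarith [hreal, hsq]
  · -- Case B : 100 ≤ τ
    set lo : Fin 3 → ℝ := fun _ : Fin 3 => -(K/20) with hlo
    set hi : Fin 3 → ℝ := fun _ : Fin 3 => K/20 with hhi
    set S := {x : E3 | ∀ i, x i ∈ Set.Icc (lo i) (hi i)} with hS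
    have hw : ∀ i : Fin 3, hi i - lo i = K/10 := by intro i; simp only [hlo, hhi]; ring
    have hvol : volume S = ENNReal.ofReal (K/10) ^ 3 := by
      rw [hS, volume_box, Fin.prod_univ_three]
      simp only [hlo, hhi]
      rw [show K/20 - -(K/20) = K/10 by ring]
      ring
    have hptB : ∀ x ∈ S, ENNReal.ofReal (μ * (17/τ)^2)
        ≤ (‖groundC θ μ (x + v) - groundC θ μ x‖₊ : ℝ≥0∞)^2 := by
      intro x hx
      rw [hTGx x]
      apply ENNReal.ofReal_le_ofReal
      apply mul_le_mul_of_nonneg_left _ hμ0.le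
      have habs : ∀ i : Fin 3, |μ * x i| ≤ τ/20 := by
        intro i
        have hxi := hx i
        simp only [hlo, hhi, Set.mem_Icc] at hxi
        rw [abs_mul, abs_of_pos hμ0]
        have : |x i| ≤ K/20 := abs_le.2 ⟨hxi.1, hxi.2⟩
        calc μ * |x i| ≤ μ * (K/20) := mul_le_mul_of_nonneg_left this hμ0.le
          _ = τ/20 := by rw [hτdef]; ring
      have hgap : 17/τ ≤ W (μ • x) - W (μ • x + τ • e3 0) := by
        rw [W_coords (μ • x), W_coords (μ • x + τ • e3 0)]
        obtain ⟨c0, c1, c2⟩ := coords_shift (μ • x) τ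
        rw [c0, c1, c2]
        exact caseB_gap hcase (habs 0) (habs 1) (habs 2)
      have hnn : 0 ≤ 17/τ := by positivity
      exact pow_le_pow_left₀ hnn hgap 2
    have hlowB : ENNReal.ofReal (289*K/(1000*R))
        ≤ ∫⁻ x, (‖groundC θ μ (x + v) - groundC θ μ x‖₊ : ℝ≥0∞)^2 := by
      have hle1 : ENNReal.ofReal (289*K/(1000*R))
          ≤ ENNReal.ofReal (μ * (17/τ)^2) * volume S := by
        rw [hvol, ← ENNReal.ofReal_pow (by positivity), ← ENNReal.ofReal_mul (by positivity)]
        apply ENNReal.ofReal_le_ofReal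
        have he : μ * (17/τ)^2 * (K/10)^3 = 289*K/(1000*μ) := by
          rw [hτdef]; field_simp; ring
        rw [he]
        apply div_le_div_of_nonneg_left (by positivity) (by positivity)
        linarith
      calc ENNReal.ofReal (289*K/(1000*R)) ≤ ENNReal.ofReal (μ * (17/τ)^2) * volume S := hle1
        _ = ∫⁻ _ in S, ENNReal.ofReal (μ * (17/τ)^2) := (setLIntegral_const S _).symm
        _ ≤ ∫⁻ x in S, (‖groundC θ μ (x + v) - groundC θ μ x‖₊ : ℝ≥0∞)^2 :=
            setLIntegral_mono hTGmeas hptB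
        _ ≤ _ := setLIntegral_le_lintegral S _
    have hreal : 289*K/(1000*R) ≤ (2*M+1)^2 :=
      (ENNReal.ofReal_le_ofReal_iff (by positivity)).1 (hlowB.trans hUp)
    have hKbig : (2*M+1)^2 < 289*K/(1000*R) := by
      rw [lt_div_iff₀ (by positivity)]
      have h4 : 0 < R*(2*M+1)^2 := by positivity
      rw [hKdef]; nlinarith
    linarith
end
end
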